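/- arXiv:1605.02212 — 2 statements merged into one kernel-verified Lean document; each statement's English description precedes it below -/
import Mathlib

section
/- Let I be an admissible ideal of ℕ×ℕ, x = {x_{jk}} a double sequence of reals, and (α,β) an open interval with x_{jk} ∉ (α,β) for all (j,k). Set A = {(j,k) : x_{jk} ≤ α}, and D_{mn}(A) = (1/(mn))|{(j,k) ∈ A : j ≤ m, k ≤ n}|. If x is I-statistically pre-Cauchy, then I-lim_{m,n} D_{mn}(A)·(1 − D_{mn}(A)) = 0. -/
open Set

def IsIdeal {α : Type*} (I : Set (Set α)) : Prop :=
  ∅ ∈ I ∧ (∀ A B : Set α, A ∈ I → B ∈ I → A ∪ B ∈ I) ∧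
    (∀ A B : Set α, B ⊆ A → A ∈ I → B ∈ I)

def Admissible (I : Set (Set (ℕ × ℕ))) : Prop :=
  IsIdeal I ∧ Set.univ ∉ I ∧ ∀ p : ℕ × ℕ, ({p} : Set (ℕ × ℕ)) ∈ I

def StronglyAdmissible (I : Set (Set (ℕ × ℕ))) : Prop :=
  IsIdeal I ∧ Set.univ ∉ I ∧
    ∀ i : ℕ, ({i} ×ˢ (Set.univ : Set ℕ)) ∈ I ∧ ((Set.univ : Set ℕ) ×ˢ {i}) ∈ I

/-- `dens A m n = (1/(mn)) |{(j,k) ∈ A : j ≤ m, k ≤ n}|`. -/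
noncomputable def dens (A : Set (ℕ × ℕ)) (m n : ℕ) : ℝ :=
  ({jk ∈ A | 1 ≤ jk.1 ∧ jk.1 ≤ m ∧ 1 ≤ jk.2 ∧ jk.2 ≤ n}.ncard : ℝ) / (m * n)

/-- `dens2 A m n = (1/(m²n²)) |{((j,k),(p,q)) ∈ A : j,p ≤ m, k,q ≤ n}|`. -/
noncomputable def dens2 (A : Set ((ℕ × ℕ) × (ℕ × ℕ))) (m n : ℕ) : ℝ :=
  ({q ∈ A | 1 ≤ q.1.1 ∧ q.1.1 ≤ m ∧ 1 ≤ q.2.1 ∧ q.2.1 ≤ m ∧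
      1 ≤ q.1.2 ∧ q.1.2 ≤ n ∧ 1 ≤ q.2.2 ∧ q.2.2 ≤ n}.ncard : ℝ) /
    ((m : ℝ) ^ 2 * (n : ℝ) ^ 2)

/-- `I`-statistical convergence of a real double sequence. -/
def IStatConv (I : Set (Set (ℕ × ℕ))) (x : ℕ → ℕ → ℝ) (L : ℝ) : Prop :=
  ∀ ε > (0:ℝ), ∀ δ > (0:ℝ),
    {mn : ℕ × ℕ | δ ≤ dens {jk : ℕ × ℕ | ε ≤ |x jk.1 jk.2 - L|} mn.1 mn.2} ∈ I

/-- `I`-statistically pre-Cauchy real double sequences. -/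
def IStatPreCauchy (I : Set (Set (ℕ × ℕ))) (x : ℕ → ℕ → ℝ) : Prop :=
  ∀ ε > (0:ℝ), ∀ δ > (0:ℝ),
    {mn : ℕ × ℕ | δ ≤ dens2
      {q : (ℕ × ℕ) × (ℕ × ℕ) | ε ≤ |x q.1.1 q.1.2 - x q.2.1 q.2.2|} mn.1 mn.2} ∈ I

/-- Convergence of a real double sequence in Pringsheim's sense. -/
def PTendsto (y : ℕ → ℕ → ℝ) (a : ℝ) : Prop :=
  ∀ ε > (0:ℝ), ∃ N : ℕ, ∀ m ≥ N, ∀ n ≥ N, |y m n - a| < ε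

/-- `I`-limit of a real double sequence. -/
def ILim (I : Set (Set (ℕ × ℕ))) (y : ℕ → ℕ → ℝ) (L : ℝ) : Prop :=
  ∀ ε > (0:ℝ), {mn : ℕ × ℕ | ε ≤ |y mn.1 mn.2 - L|} ∈ I

/-- `I`-asymptotic density zero. -/
def IDensZero (I : Set (Set (ℕ × ℕ))) (A : Set (ℕ × ℕ)) : Prop :=
  ILim I (fun m n => dens A m n) 0

lemma aux_ncard_prod {A B : Type*} (s : Set A) (t : Set B) :
    (s ×ˢ t).ncard = s.ncard * t.ncard := by
  rw [← Nat.card_coe_set_eq, ← Nat.card_coe_set_eq, ← Nat.card_coe_set_eq,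
    ← Nat.card_prod]
  exact Nat.card_congr (Equiv.Set.prod s t)

lemma aux_ncard_Icc (m : ℕ) : (Set.Icc 1 m).ncard = m := by
  rw [← Finset.coe_Icc, Set.ncard_coe_finset, Nat.card_Icc]; omega

/-- Let `x` be a real double sequence avoiding the open interval `(α,β)`, and
`A = {(j,k) : x_{jk} ≤ α}`. If `x` is `I`-statistically pre-Cauchy then
`I-lim_{m,n} D_{mn}(A)·(1 − D_{mn}(A)) = 0`. -/
theorem iStatPreCauchy_dens_product
    (I : Set (Set (ℕ × ℕ))) (hI : Admissible I)
    (x : ℕ → ℕ → ℝ) (α β : ℝ) (hαβ : α < β)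
    (havoid : ∀ j k : ℕ, x j k ∉ Set.Ioo α β)
    (hx : IStatPreCauchy I x) :
    ILim I (fun m n =>
      dens {jk : ℕ × ℕ | x jk.1 jk.2 ≤ α} m n *
        (1 - dens {jk : ℕ × ℕ | x jk.1 jk.2 ≤ α} m n)) 0 := by
  intro ε hε
  set A : Set (ℕ × ℕ) := {jk : ℕ × ℕ | x jk.1 jk.2 ≤ α} with hA
  set E : Set ((ℕ × ℕ) × (ℕ × ℕ)) :=
    {q : (ℕ × ℕ) × (ℕ × ℕ) | β - α ≤ |x q.1.1 q.1.2 - x q.2.1 q.2.2|} with hE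
  have hT := hx (β - α) (by linarith) ε hε
  refine hI.1.2.2 _ _ ?_ hT
  rintro ⟨m, n⟩ hmn
  simp only [Set.mem_setOf_eq, sub_zero] at hmn ⊢
  -- key inequality for each m n
  -- first dispose of m = 0 or n = 0
  rcases Nat.eq_zero_or_pos m with hm | hm
  · exfalso
    have : dens A m n = 0 := by
      simp [dens, hm]
    rw [this] at hmn; simp at hmn; linarith
  rcases Nat.eq_zero_or_pos n with hn | hn
  · exfalso
    have : dens A m n = 0 := by
      simp [dens, hn]
    rw [this] at hmn; simp at hmn; linarith
  -- windowed sets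
  set Aw : Set (ℕ × ℕ) := {jk ∈ A | 1 ≤ jk.1 ∧ jk.1 ≤ m ∧ 1 ≤ jk.2 ∧ jk.2 ≤ n} with hAw
  set B : Set (ℕ × ℕ) := {jk : ℕ × ℕ | β ≤ x jk.1 jk.2} with hB
  set Bw : Set (ℕ × ℕ) := {jk ∈ B | 1 ≤ jk.1 ∧ jk.1 ≤ m ∧ 1 ≤ jk.2 ∧ jk.2 ≤ n} with hBw
  set W : Set (ℕ × ℕ) := Set.Icc 1 m ×ˢ Set.Icc 1 n with hW
  have hWfin : W.Finite := (Set.finite_Icc _ _).prod (Set.finite_Icc _ _)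
  have hAwW : Aw ⊆ W := by
    rintro ⟨j, k⟩ ⟨_, h1, h2, h3, h4⟩
    exact ⟨⟨h1, h2⟩, ⟨h3, h4⟩⟩
  have hBwW : Bw ⊆ W := by
    rintro ⟨j, k⟩ ⟨_, h1, h2, h3, h4⟩
    exact ⟨⟨h1, h2⟩, ⟨h3, h4⟩⟩
  have hcover : Aw ∪ Bw = W := by
    apply Set.Subset.antisymm (Set.union_subset hAwW hBwW)
    rintro ⟨j, k⟩ ⟨⟨h1, h2⟩, h3, h4⟩
    have := havoid j k
    simp only [Set.mem_Ioo, not_and, not_lt] at this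
    rcases le_or_gt (x j k) α with h | h
    · exact Or.inl ⟨h, h1, h2, h3, h4⟩
    · exact Or.inr ⟨this h, h1, h2, h3, h4⟩
  have hdisj : Disjoint Aw Bw := by
    rw [Set.disjoint_left]
    rintro ⟨j, k⟩ ⟨ha, _⟩ ⟨hb, _⟩
    simp only [hA, hB, Set.mem_setOf_eq] at ha hb
    linarith
  have hWcard : W.ncard = m * n := by
    rw [hW, aux_ncard_prod, aux_ncard_Icc, aux_ncard_Icc]
  have hsum : Aw.ncard + Bw.ncard = m * n := by
    rw [← hWcard, ← hcover,
      Set.ncard_union_eq hdisj (hWfin.subset hAwW) (hWfin.subset hBwW)]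
  -- the product of windows sits inside the dens2 window of E
  set Ew : Set ((ℕ × ℕ) × (ℕ × ℕ)) :=
    {q ∈ E | 1 ≤ q.1.1 ∧ q.1.1 ≤ m ∧ 1 ≤ q.2.1 ∧ q.2.1 ≤ m ∧
      1 ≤ q.1.2 ∧ q.1.2 ≤ n ∧ 1 ≤ q.2.2 ∧ q.2.2 ≤ n} with hEw
  have hEwfin : Ew.Finite := by
    apply (hWfin.prod hWfin).subset
    rintro ⟨⟨j, k⟩, ⟨p, q⟩⟩ ⟨_, h1, h2, h3, h4, h5, h6, h7, h8⟩
    exact ⟨⟨⟨h1, h2⟩, ⟨h5, h6⟩⟩, ⟨⟨h3, h4⟩, ⟨h7, h8⟩⟩⟩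
  have hprodsub : Aw ×ˢ Bw ⊆ Ew := by
    rintro ⟨⟨j, k⟩, ⟨p, q⟩⟩ ⟨⟨ha, a1, a2, a3, a4⟩, ⟨hb, b1, b2, b3, b4⟩⟩
    simp only [hA, Set.mem_setOf_eq] at ha
    simp only [hB, Set.mem_setOf_eq] at hb
    refine ⟨?_, a1, a2, b1, b2, a3, a4, b3, b4⟩
    simp only [hE, Set.mem_setOf_eq]
    rw [abs_sub_comm, abs_of_nonneg (by linarith)]
    linarith
  have hcardle : Aw.ncard * Bw.ncard ≤ Ew.ncard := by
    rw [← aux_ncard_prod]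
    exact Set.ncard_le_ncard hprodsub hEwfin
  -- translate to reals
  have hm' : (0:ℝ) < m := by exact_mod_cast hm
  have hn' : (0:ℝ) < n := by exact_mod_cast hn
  have hmn' : (0:ℝ) < (m:ℝ) * n := by positivity
  have hdensA : dens A m n = (Aw.ncard : ℝ) / ((m:ℝ) * n) := by
    simp only [dens, hAw]
  have hone : 1 - dens A m n = (Bw.ncard : ℝ) / ((m:ℝ) * n) := by
    rw [hdensA]
    have : ((Aw.ncard : ℝ) + Bw.ncard) = (m:ℝ) * n := by
      exact_mod_cast congrArg (Nat.cast (R := ℝ)) hsum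
    field_simp
    linarith
  have hkey : dens A m n * (1 - dens A m n) ≤ dens2 E m n := by
    rw [hone, hdensA]
    have h2 : dens2 E m n = (Ew.ncard : ℝ) / ((m:ℝ)^2 * (n:ℝ)^2) := rfl
    rw [h2, div_mul_div_comm]
    have heq : ((m:ℝ)*n)*((m:ℝ)*n) = (m:ℝ)^2*(n:ℝ)^2 := by ring
    rw [heq]
    gcongr
    exact_mod_cast hcardle
  -- conclude
  have hA0 : 0 ≤ dens A m n := by
    rw [hdensA]; positivity
  have hA1 : 0 ≤ 1 - dens A m n := by
    rw [hone]; positivity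
  have : ε ≤ dens A m n * (1 - dens A m n) := by
    rwa [abs_of_nonneg (mul_nonneg hA0 hA1)] at hmn
  linarith
end

section
/- Let I = I_fin, the ideal of subsets of ℕ×ℕ contained in a finite union of rows and columns (equivalently, sets whose double natural density counting function is eventually handled by finitely many rows/columns). If x = {x_{jk}} is an I_fin-statistically pre-Cauchy double sequence of reals and x_{jk} ∉ (α,β) for all (j,k), then with A = {(j,k) : x_{jk} ≤ α} and B = {(j,k) : x_{jk} ≥ β}, either d(A) = 0 or d(B) = 0, where d denotes double natural density. -/
open Set

/-- Ordinary statistically pre-Cauchy condition (the `I_fin`-statistical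
pre-Cauchy condition), via Pringsheim limits. -/
def StatPreCauchy (x : ℕ → ℕ → ℝ) : Prop :=
  ∀ ε > (0:ℝ), PTendsto (fun m n => dens2
    {q : (ℕ × ℕ) × (ℕ × ℕ) | ε ≤ |x q.1.1 q.1.2 - x q.2.1 q.2.2|} m n) 0

/-! With `A = {x ≤ α}`, avoidance of `(α, β)` makes `B` the complement of `A`, so every pair in
`A × B` is `(β - α)`-separated and the pre-Cauchy condition forces `a (1 - a) → 0` for
`a = dens A m n`. Hence eventually `a < 1/4` or `a > 3/4`; as enlarging `m` or `n` by one moves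
`a` by at most `1/2`, the alternative cannot switch, which gives `a → 0` or `1 - a → 0`. -/

open Filter hiding PTendsto
open Topology

theorem pTendsto_iff_tendsto {y : ℕ → ℕ → ℝ} {a : ℝ} :
    PTendsto y a ↔ Tendsto (fun p : ℕ × ℕ => y p.1 p.2) atTop (𝓝 a) := by
  simp only [PTendsto, Metric.tendsto_atTop, Real.dist_eq, Prod.forall, Prod.exists,
    Prod.mk_le_mk, ge_iff_le]
  refine forall₂_congr fun ε _ => ⟨fun ⟨N, h⟩ => ⟨N, N, fun m n hmn => h m hmn.1 n hmn.2⟩,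
    fun ⟨M, N, h⟩ => ⟨max M N, fun m hm n hn =>
      h m n ⟨le_of_max_le_left hm, le_of_max_le_right hn⟩⟩⟩

theorem dens_eq_card (A : Set (ℕ × ℕ)) [DecidablePred (· ∈ A)] (m n : ℕ) :
    dens A m n = ((Finset.Icc 1 m ×ˢ Finset.Icc 1 n).filter (· ∈ A)).card / (m * n) := by
  rw [dens, ← Set.ncard_coe_finset]
  congr 3
  ext p
  simp only [Set.mem_ofPred_eq, Finset.coe_filter, Finset.mem_product, Finset.mem_Icc]
  tauto

theorem dens2_eq_card (S : Set ((ℕ × ℕ) × (ℕ × ℕ))) [DecidablePred (· ∈ S)] (m n : ℕ) :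
    dens2 S m n =
      (((Finset.Icc 1 m ×ˢ Finset.Icc 1 n) ×ˢ (Finset.Icc 1 m ×ˢ Finset.Icc 1 n)).filter
        (· ∈ S)).card / ((m : ℝ) ^ 2 * (n : ℝ) ^ 2) := by
  rw [dens2, ← Set.ncard_coe_finset]
  congr 3
  ext q
  simp only [Set.mem_ofPred_eq, Finset.coe_filter, Finset.mem_product, Finset.mem_Icc]
  tauto

theorem dens_nonneg (A : Set (ℕ × ℕ)) (m n : ℕ) : 0 ≤ dens A m n := by
  unfold dens; positivity

theorem dens_le_one (A : Set (ℕ × ℕ)) (m n : ℕ) : dens A m n ≤ 1 := by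
  classical
  rw [dens_eq_card]
  refine div_le_one_of_le₀ ?_ (by positivity)
  exact_mod_cast (Finset.card_filter_le _ _).trans (by simp)

theorem dens_compl (A : Set (ℕ × ℕ)) {m n : ℕ} (hm : 0 < m) (hn : 0 < n) :
    dens Aᶜ m n = 1 - dens A m n := by
  classical
  rw [dens_eq_card, dens_eq_card, eq_sub_iff_add_eq, ← add_div, div_eq_one_iff_eq (by positivity)]
  simp only [Set.mem_compl_iff]
  rw [add_comm]
  exact_mod_cast (Finset.card_filter_add_card_filter_not _).trans (by simp)

theorem dens_mul_dens_le_dens2 {A B : Set (ℕ × ℕ)} {S : Set ((ℕ × ℕ) × (ℕ × ℕ))}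
    (h : A ×ˢ B ⊆ S) (m n : ℕ) : dens A m n * dens B m n ≤ dens2 S m n := by
  classical
  rw [dens_eq_card, dens_eq_card, dens2_eq_card, div_mul_div_comm]
  have hden : (m * n : ℝ) * (m * n) = (m : ℝ) ^ 2 * (n : ℝ) ^ 2 := by ring
  rw [hden]
  gcongr
  rw [← Nat.cast_mul, ← Finset.card_product]
  exact_mod_cast Finset.card_le_card fun q hq => by
    simp only [Finset.mem_product, Finset.mem_filter] at hq ⊢
    exact ⟨⟨hq.1.1, hq.2.1⟩, h ⟨hq.1.2, hq.2.2⟩⟩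

theorem dens_preimage_swap (A : Set (ℕ × ℕ)) (m n : ℕ) :
    dens (Prod.swap ⁻¹' A) n m = dens A m n := by
  rw [dens, dens, mul_comm (n : ℝ)]
  congr 2
  rw [← Set.ncard_preimage_of_injective_subset_range Prod.swap_injective
    (by simp [Prod.swap_surjective.range_eq])]
  congr 1
  ext p
  simp only [Set.mem_preimage, Set.mem_ofPred_eq, Prod.fst_swap, Prod.snd_swap]
  tauto

theorem card_filter_Icc_succ_product_le (A : Set (ℕ × ℕ)) [DecidablePred (· ∈ A)] (m n : ℕ) :
    ((Finset.Icc 1 (m + 1) ×ˢ Finset.Icc 1 n).filter (· ∈ A)).card ≤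
      ((Finset.Icc 1 m ×ˢ Finset.Icc 1 n).filter (· ∈ A)).card + n := by
  rw [← Finset.insert_Icc_right_eq_Icc_add_one (by omega), Finset.insert_eq,
    Finset.union_product, Finset.filter_union, add_comm _ n]
  refine (Finset.card_union_le _ _).trans (Nat.add_le_add_right ?_ _)
  exact (Finset.card_filter_le _ _).trans (by simp)

theorem abs_dens_succ_sub_dens_le (A : Set (ℕ × ℕ)) {m n : ℕ} (hm : 0 < m) (hn : 0 < n) :
    |dens A (m + 1) n - dens A m n| ≤ 1 / (m + 1) := by
  classical
  have hbox : Finset.Icc 1 m ×ˢ Finset.Icc 1 n ⊆ Finset.Icc 1 (m + 1) ×ˢ Finset.Icc 1 n :=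
    Finset.product_subset_product_left (Finset.Icc_subset_Icc_right m.le_succ)
  obtain ⟨r, hr⟩ :=
    Nat.exists_eq_add_of_le (Finset.card_le_card (Finset.filter_subset_filter (· ∈ A) hbox))
  have hrn : r ≤ n := by have := card_filter_Icc_succ_product_le A m n; omega
  have hstep : dens A (m + 1) n - dens A m n = ((r : ℝ) / n - dens A m n) / (m + 1) := by
    rw [dens_eq_card, dens_eq_card, Nat.cast_add_one, hr]
    field_simp
    push_cast
    ring
  have hr01 : (r : ℝ) / n ≤ 1 := div_le_one_of_le₀ (by exact_mod_cast hrn) (by positivity)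
  rw [hstep, abs_div, abs_of_pos (by positivity : (0 : ℝ) < m + 1)]
  gcongr
  simpa using abs_sub_le_of_le_of_le (by positivity) hr01 (dens_nonneg A m n) (dens_le_one A m n)

theorem abs_dens_succ_right_sub_dens_le (A : Set (ℕ × ℕ)) {m n : ℕ} (hm : 0 < m) (hn : 0 < n) :
    |dens A m (n + 1) - dens A m n| ≤ 1 / (n + 1) := by
  simpa only [dens_preimage_swap] using abs_dens_succ_sub_dens_le (Prod.swap ⁻¹' A) hn hm

theorem lt_iff_lt_of_abs_step_le_gap {g : ℕ → ℝ} {N : ℕ} {a b : ℝ}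
    (hgap : ∀ n ≥ N, g n < a ∨ b < g n) (hstep : ∀ n ≥ N, |g (n + 1) - g n| ≤ b - a) :
    ∀ n ≥ N, (g n < a ↔ g N < a) := by
  intro n hn
  induction n, hn using Nat.le_induction with
  | base => rfl
  | succ n hn ih =>
    rw [← ih]
    have := abs_le.1 (hstep n hn)
    rcases hgap n hn with h | h <;> rcases hgap (n + 1) (hn.trans n.le_succ) with h' | h' <;>
      constructor <;> intro <;> linarith

theorem lt_iff_lt_of_abs_step_le_gap₂ {f : ℕ → ℕ → ℝ} {N : ℕ} {a b : ℝ}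
    (hgap : ∀ m ≥ N, ∀ n ≥ N, f m n < a ∨ b < f m n)
    (hstep₁ : ∀ m ≥ N, ∀ n ≥ N, |f (m + 1) n - f m n| ≤ b - a)
    (hstep₂ : ∀ m ≥ N, ∀ n ≥ N, |f m (n + 1) - f m n| ≤ b - a) :
    ∀ m ≥ N, ∀ n ≥ N, (f m n < a ↔ f N N < a) := fun m hm n hn => by
  rw [lt_iff_lt_of_abs_step_le_gap (hgap m hm) (hstep₂ m hm) n hn,
    lt_iff_lt_of_abs_step_le_gap (fun m hm => hgap m hm N le_rfl)
      (fun m hm => hstep₁ m hm N le_rfl) m hm]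

theorem tendsto_zero_or_one_sub_of_tendsto_mul_one_sub {f : ℕ → ℕ → ℝ}
    (h01 : ∀ m n, f m n ∈ Set.Icc 0 1)
    (hstep₁ : ∀ m ≥ 1, ∀ n ≥ 1, |f (m + 1) n - f m n| ≤ 1 / 2)
    (hstep₂ : ∀ m ≥ 1, ∀ n ≥ 1, |f m (n + 1) - f m n| ≤ 1 / 2)
    (h : Tendsto (fun p : ℕ × ℕ => f p.1 p.2 * (1 - f p.1 p.2)) atTop (𝓝 0)) :
    Tendsto (fun p : ℕ × ℕ => f p.1 p.2) atTop (𝓝 0) ∨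
      Tendsto (fun p : ℕ × ℕ => 1 - f p.1 p.2) atTop (𝓝 0) := by
  obtain ⟨⟨N₁, N₂⟩, hN⟩ :=
    eventually_atTop.1 (h.eventually (gt_mem_nhds (by norm_num : (0 : ℝ) < 3 / 16)))
  obtain ⟨N, hN₁, hN₂, hN1⟩ : ∃ N, N₁ ≤ N ∧ N₂ ≤ N ∧ 1 ≤ N :=
    ⟨max (max N₁ N₂) 1, by omega, by omega, by omega⟩
  have hgap : ∀ m ≥ N, ∀ n ≥ N, f m n < 1 / 4 ∨ 3 / 4 < f m n := by
    intro m hm n hn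
    have := hN (m, n) ⟨hN₁.trans hm, hN₂.trans hn⟩
    by_contra! hmid
    nlinarith
  have hside := lt_iff_lt_of_abs_step_le_gap₂ hgap
    (fun m hm n hn => (hstep₁ m (hN1.trans hm) n (hN1.trans hn)).trans (by norm_num))
    (fun m hm n hn => (hstep₂ m (hN1.trans hm) n (hN1.trans hn)).trans (by norm_num))
  have hev : ∀ᶠ p : ℕ × ℕ in atTop, N ≤ p.1 ∧ N ≤ p.2 := by
    filter_upwards [eventually_ge_atTop (N, N)] with p hp using hp
  have hlim : Tendsto (fun p : ℕ × ℕ => 4 / 3 * (f p.1 p.2 * (1 - f p.1 p.2))) atTop (𝓝 0) := by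
    simpa using h.const_mul (4 / 3)
  by_cases hNN : f N N < 1 / 4
  · refine .inl (squeeze_zero' (.of_forall fun p => (h01 p.1 p.2).1) ?_ hlim)
    filter_upwards [hev] with p hp
    have hsmall := (hside p.1 hp.1 p.2 hp.2).2 hNN
    nlinarith [(h01 p.1 p.2).1]
  · refine .inr (squeeze_zero' (.of_forall fun p => sub_nonneg.2 (h01 p.1 p.2).2) ?_ hlim)
    filter_upwards [hev] with p hp
    have hlarge := (hgap p.1 hp.1 p.2 hp.2).resolve_left (mt (hside p.1 hp.1 p.2 hp.2).1 hNN)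
    nlinarith [(h01 p.1 p.2).2]

/-- If `x` is an `I_fin`-statistically (i.e. ordinarily statistically)
pre-Cauchy real double sequence with `x_{jk} ∉ (α,β)` for all `(j,k)`, then
with `A = {(j,k) : x_{jk} ≤ α}` and `B = {(j,k) : x_{jk} ≥ β}`, either `A` or
`B` has double natural density `0`. -/
theorem statPreCauchy_dens_dichotomy
    (x : ℕ → ℕ → ℝ) (α β : ℝ) (hαβ : α < β)
    (havoid : ∀ j k : ℕ, x j k ∉ Set.Ioo α β)
    (hx : StatPreCauchy x) :
    PTendsto (fun m n => dens {jk : ℕ × ℕ | x jk.1 jk.2 ≤ α} m n) 0 ∨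
    PTendsto (fun m n => dens {jk : ℕ × ℕ | β ≤ x jk.1 jk.2} m n) 0 := by
  set A := {jk : ℕ × ℕ | x jk.1 jk.2 ≤ α}
  have hB : {jk : ℕ × ℕ | β ≤ x jk.1 jk.2} = Aᶜ := by
    ext jk
    have := havoid jk.1 jk.2
    simp only [Set.mem_Ioo, not_and, not_lt] at this
    simp only [A, Set.mem_compl_iff, Set.mem_ofPred_eq, not_le]
    exact ⟨fun h => hαβ.trans_le h, this⟩
  have hsep : A ×ˢ Aᶜ ⊆ {q | β - α ≤ |x q.1.1 q.1.2 - x q.2.1 q.2.2|} := by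
    rintro ⟨p, q⟩ ⟨hp, hq⟩
    rw [← hB] at hq
    simp only [A, Set.mem_ofPred_eq] at hp hq ⊢
    rw [abs_sub_comm]
    exact le_abs.2 (.inl (by linarith))
  have hpos : ∀ᶠ p : ℕ × ℕ in atTop, 0 < p.1 ∧ 0 < p.2 := by
    filter_upwards [eventually_ge_atTop (1, 1)] with p hp using ⟨hp.1, hp.2⟩
  have hmix : Tendsto (fun p : ℕ × ℕ => dens A p.1 p.2 * (1 - dens A p.1 p.2)) atTop (𝓝 0) := by
    refine squeeze_zero' (.of_forall fun p => mul_nonneg (dens_nonneg ..)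
      (sub_nonneg.2 (dens_le_one ..))) ?_ (pTendsto_iff_tendsto.1 (hx (β - α) (sub_pos.2 hαβ)))
    filter_upwards [hpos] with p hp
    rw [← dens_compl A hp.1 hp.2]
    exact dens_mul_dens_le_dens2 hsep p.1 p.2
  have hhalf : ∀ k : ℕ, 1 ≤ k → (1 : ℝ) / (k + 1) ≤ 1 / 2 := fun k hk => by
    have : (1 : ℝ) ≤ k := by exact_mod_cast hk
    gcongr
    linarith
  rw [hB, pTendsto_iff_tendsto, pTendsto_iff_tendsto]
  refine (tendsto_zero_or_one_sub_of_tendsto_mul_one_sub (f := dens A)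
    (fun m n => ⟨dens_nonneg .., dens_le_one ..⟩)
    (fun m hm n hn => (abs_dens_succ_sub_dens_le A hm hn).trans (hhalf m hm))
    (fun m hm n hn => (abs_dens_succ_right_sub_dens_le A hm hn).trans (hhalf n hn)) hmix).imp
    id fun h => h.congr' ?_
  filter_upwards [hpos] with p hp using (dens_compl A hp.1 hp.2).symm
end
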